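/- arXiv:1811.00594 — 2 statements merged into one kernel-verified Lean document; each statement's English description precedes it below -/
import Mathlib

section
/- Let θ : A → A^λ and ζ : B → B^λ be substitutions of the same constant length λ ≥ 2, each primitive, with θ(a₀)_0 = a₀ and ζ(b₀)_0 = b₀ for letters a₀ ∈ A, b₀ ∈ B. Let 𝒜 ⊆ A × B project onto both A and B, satisfy (a,b) ∈ 𝒜 ⇒ (θ(a)_j, ζ(b)_j) ∈ 𝒜 for all j < λ, contain (a₀,b₀), and suppose the joining substitution Σ = θ∨ζ : 𝒜 → 𝒜^λ, Σ(a,b)_j = (θ(a)_j, ζ(b)_j), is primitive. Then lcm(h(θ), h(ζ)) divides h(Σ), and max(c(θ), c(ζ)) ≤ c(Σ) ≤ c(θ)·c(ζ). -/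
open Filter Topology

/-- `substIter θ l k a j` is the `j`-th letter of `θ^k(a)`, where `θ : A → A^l` is a
substitution of constant length `l` (the letters of `θ(a)` being `θ a 0, …, θ a (l-1)`).
It is meaningful for `j < l ^ k` and satisfies
`θ^{k+1}(a)_{j'·l + r} = θ(θ^k(a)_{j'})_r`. -/
def substIter {A : Type*} (θ : A → ℕ → A) (l : ℕ) : ℕ → A → ℕ → A
  | 0, a, _ => a
  | k + 1, a, j => θ (substIter θ l k a (j / l)) (j % l)

/-- A substitution of constant length `l` is primitive if some iterate of every letter
contains every letter. -/
def SubstPrimitive {A : Type*} (θ : A → ℕ → A) (l : ℕ) : Prop :=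
  ∃ k, 1 ≤ k ∧ ∀ a b : A, ∃ j, j < l ^ k ∧ substIter θ l k a j = b

/-- Primitivity of a substitution restricted to a sub-alphabet `S`. -/
def SubstPrimitiveOn {A : Type*} (θ : A → ℕ → A) (l : ℕ) (S : Set A) : Prop :=
  ∃ k, 1 ≤ k ∧ ∀ a ∈ S, ∀ b ∈ S, ∃ j, j < l ^ k ∧ substIter θ l k a j = b

/-- The column number of a substitution of constant length `l`, restricted to the
sub-alphabet `S`: the minimal cardinality of a column set `{θ^k(a)_j : a ∈ S}`. -/
noncomputable def columnNumberOn {A : Type*} (θ : A → ℕ → A) (l : ℕ) (S : Set A) : ℕ :=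
  sInf { n : ℕ | ∃ k, 1 ≤ k ∧ ∃ j, j < l ^ k ∧
    ((fun a => substIter θ l k a j) '' S).ncard = n }

/-- The column number `c(θ)` of a substitution of constant length `l`. -/
noncomputable def columnNumber {A : Type*} (θ : A → ℕ → A) (l : ℕ) : ℕ :=
  columnNumberOn θ l Set.univ

/-- The one-sided fixed point `u` of `θ` obtained by iterating `θ` at a letter `a₀`
with `θ(a₀)_0 = a₀`: `u n = θ^k(a₀)_n` for any `k` with `n < l^k`. -/
def substFixedPoint {A : Type*} (θ : A → ℕ → A) (l : ℕ) (a₀ : A) : ℕ → A :=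
  fun n => substIter θ l (n + 1) a₀ n

/-- The height `h(θ)`: the largest `m ≥ 1` coprime to `l` dividing
`gcd {r ≥ 1 : u[r] = u[0]}`, i.e. dividing every return time of `u[0]`. -/
noncomputable def substHeight {A : Type*} (θ : A → ℕ → A) (l : ℕ) (a₀ : A) : ℕ :=
  sSup { m : ℕ | 1 ≤ m ∧ Nat.Coprime m l ∧
    ∀ r : ℕ, 1 ≤ r → substFixedPoint θ l a₀ r = substFixedPoint θ l a₀ 0 → m ∣ r }

/-- The subshift `X_θ ⊆ A^ℤ`: all `x` each of whose finite blocks occurs in some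
`θ^k(a)`. -/
def subshift {A : Type*} (θ : A → ℕ → A) (l : ℕ) : Set (ℤ → A) :=
  { x | ∀ (i : ℤ) (n : ℕ), ∃ k, 1 ≤ k ∧ ∃ a : A, ∃ j : ℕ, j + n ≤ l ^ k ∧
      ∀ m : ℕ, m < n → x (i + (m : ℤ)) = substIter θ l k a (j + m) }

/-- The subshift `X_x ⊆ A^ℤ` generated by a one-sided sequence `x ∈ A^ℕ`: all `z`
each of whose finite blocks occurs in `x`. -/
def subshiftOf {A : Type*} (x : ℕ → A) : Set (ℤ → A) :=
  { z | ∀ (i : ℤ) (n : ℕ), ∃ j : ℕ, ∀ m : ℕ, m < n → z (i + (m : ℤ)) = x (j + m) }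

/-- The left shift on `A^ℤ`. -/
def shift {A : Type*} (x : ℤ → A) : ℤ → A := fun n => x (n + 1)

/-- A bounded arithmetic function. -/
def BoundedSeq (u : ℕ → ℂ) : Prop := ∃ C : ℝ, ∀ n, ‖u n‖ ≤ C

/-- A multiplicative arithmetic function: `u(mn) = u(m)u(n)` for coprime `m, n`. -/
def MultiplicativeSeq (u : ℕ → ℂ) : Prop :=
  ∀ m n : ℕ, Nat.Coprime m n → u (m * n) = u m * u n

/-- An aperiodic arithmetic function: zero mean along every arithmetic progression. -/
def AperiodicSeq (u : ℕ → ℂ) : Prop :=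
  ∀ a b : ℕ, 1 ≤ a →
    Tendsto (fun N : ℕ => (N : ℂ)⁻¹ * ∑ n ∈ Finset.Icc 1 N, u (a * n + b)) atTop (nhds 0)

/-- The Weyl pseudo-metric
`d_W(x,y) = limsup_N sup_{ℓ ≥ 1} (1/N)·#{ℓ ≤ n < ℓ+N : x n ≠ y n}`. -/
noncomputable def weylDist {B : Type*} (x y : ℕ → B) : ℝ :=
  limsup (fun N : ℕ =>
    ⨆ ℓ : ℕ, ⨆ _ : 1 ≤ ℓ,
      (({ n : ℕ | ℓ ≤ n ∧ n < ℓ + N ∧ x n ≠ y n }.ncard : ℝ) / N)) atTop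

/-- A periodic sequence. -/
def IsPeriodicSeq {B : Type*} (v : ℕ → B) : Prop :=
  ∃ p, 1 ≤ p ∧ ∀ n, v (n + p) = v n

/-- Weyl rational almost periodicity: a `d_W`-limit of periodic sequences. -/
def WRAPSeq {B : Type*} (x : ℕ → B) : Prop :=
  ∀ ε : ℝ, 0 < ε → ∃ v : ℕ → B, IsPeriodicSeq v ∧ weylDist x v < ε

/-- The family `𝒳(θ)` of column sets realizing the column number of `θ`. -/
noncomputable def columnSets {A : Type*} (θ : A → ℕ → A) (l : ℕ) : Set (Set A) :=
  { M | (∃ k, 1 ≤ k ∧ ∃ j, j < l ^ k ∧ M = (fun a => substIter θ l k a j) '' Set.univ) ∧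
        M.ncard = columnNumber θ l }

/-- The synchronizing part `~θ` of `θ`, as a substitution on subsets of the alphabet:
`~θ(M)_j = {θ(a)_j : a ∈ M}`. -/
def synchPart {A : Type*} (θ : A → ℕ → A) : Set A → ℕ → Set A :=
  fun M j => (fun a => θ a j) '' M

/-- The joining `θ ∨ ζ` of two substitutions of the same constant length. -/
def joinSub {A B : Type*} (θ : A → ℕ → A) (ζ : B → ℕ → B) : A × B → ℕ → A × B :=
  fun p j => (θ p.1 j, ζ p.2 j)

/-- The pure base `θ^{(h)}` of `θ`: a substitution of length `l` on blocks of length `h`,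
`θ^{(h)}(w)_j = θ(w)[jh, (j+1)h−1]`, where `θ(w)` is the concatenation
`θ(w_0)…θ(w_{h-1})`. -/
def pureBase {A : Type*} (θ : A → ℕ → A) (l h : ℕ) : (Fin h → A) → ℕ → (Fin h → A) :=
  fun w j i => θ (w ⟨(j * h + i.val) / l % h, Nat.mod_lt _ i.pos⟩) ((j * h + i.val) % l)

/-- Iterated cocycle `σ^{(k)}`, with `σ^{(1)} = σ` and
`σ^{(k+1)}(M, j₁·l + j₂) = σ^{(k)}(M, j₁) ∘ σ(~θ^k(M)_{j₁}, j₂)`. -/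
def sigmaIter {X : Type*} {c : ℕ} (tilde : X → ℕ → X)
    (σ : X → ℕ → Equiv.Perm (Fin c)) (l : ℕ) : ℕ → X → ℕ → Equiv.Perm (Fin c)
  | 0, _, _ => 1
  | k + 1, M, j =>
      sigmaIter tilde σ l k M (j / l) * σ (substIter tilde l k M (j / l)) (j % l)

/-- The group extension substitution `Θ̂(g, M)_j = (g ∘ σ(M,j), ~θ(M)_j)`. -/
def hatTheta {X : Type*} {c : ℕ} (tilde : X → ℕ → X)
    (σ : X → ℕ → Equiv.Perm (Fin c)) : Equiv.Perm (Fin c) × X → ℕ → Equiv.Perm (Fin c) × X :=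
  fun p j => (p.1 * σ p.2 j, tilde p.2 j)

/-- The group `G` generated by the cocycle values `σ(M, j)`, `M ∈ 𝒳`, `j < l`. -/
def cocycleGroup {X : Type*} {c : ℕ} (σ : X → ℕ → Equiv.Perm (Fin c)) (l : ℕ) :
    Subgroup (Equiv.Perm (Fin c)) :=
  Subgroup.closure { g | ∃ M : X, ∃ j, j < l ∧ g = σ M j }


section Aux

/-- The iterate of a joining is the joining of the iterates. -/
lemma substIter_joinSub {A B : Type*} (θ : A → ℕ → A) (ζ : B → ℕ → B) (l : ℕ) :
    ∀ (k : ℕ) (p : A × B) (j : ℕ),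
      substIter (joinSub θ ζ) l k p j = (substIter θ l k p.1 j, substIter ζ l k p.2 j) := by
  intro k
  induction k with
  | zero => intro p j; rfl
  | succ k ih =>
      intro p j
      simp only [substIter, ih, joinSub]

/-- Composition rule for iterates. -/
lemma substIter_add {A : Type*} (θ : A → ℕ → A) (l : ℕ) :
    ∀ (k k' : ℕ) (a : A) (j : ℕ),
      substIter θ l (k + k') a j
        = substIter θ l k (substIter θ l k' a (j / l ^ k)) (j % l ^ k) := by
  intro k
  induction k with
  | zero => intro k' a j; simp [substIter, Nat.zero_add]
  | succ k ih =>
      intro k' a j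
      have h1 : k + 1 + k' = (k + k') + 1 := by omega
      rw [h1]
      show θ (substIter θ l (k + k') a (j / l)) (j % l) = _
      rw [ih]
      show _ = θ (substIter θ l k (substIter θ l k' a (j / l ^ (k+1)))
          ((j % l ^ (k+1)) / l)) ((j % l ^ (k+1)) % l)
      have e1 : j / l / l ^ k = j / l ^ (k + 1) := by
        rw [Nat.div_div_eq_div_mul, pow_succ, mul_comm]
      have e2 : (j % l ^ (k + 1)) / l = j / l % l ^ k := by
        rw [pow_succ, mul_comm]
        exact Nat.mod_mul_right_div_self j l (l ^ k)
      have e3 : (j % l ^ (k + 1)) % l = j % l := by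
        apply Nat.mod_mod_of_dvd
        exact dvd_pow_self l (Nat.succ_ne_zero k)
      rw [e1, e2, e3]

/-- Each member of a nonempty, bounded-above "height set" divides its supremum. -/
lemma mem_dvd_sSup_of_height {l : ℕ} {u : ℕ → ℕ → Prop}
    (S : Set ℕ)
    (hS : S = { m : ℕ | 1 ≤ m ∧ Nat.Coprime m l ∧ ∀ r : ℕ, 1 ≤ r → u r 0 → m ∣ r })
    (hbdd : BddAbove S) {m : ℕ} (hm : m ∈ S) : m ∣ sSup S := by
  subst hS
  have hMmem : sSup _ ∈ _ := Nat.sSup_mem ⟨m, hm⟩ hbdd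
  set M := sSup { m : ℕ | 1 ≤ m ∧ Nat.Coprime m l ∧ ∀ r : ℕ, 1 ≤ r → u r 0 → m ∣ r } with hMdef
  obtain ⟨hM1, hMcop, hMdvd⟩ := hMmem
  obtain ⟨hm1, hmcop, hmdvd⟩ := hm
  have hlcm : Nat.lcm m M ∈ { m : ℕ | 1 ≤ m ∧ Nat.Coprime m l ∧ ∀ r : ℕ, 1 ≤ r → u r 0 → m ∣ r } := by
    refine ⟨?_, ?_, ?_⟩
    · exact Nat.pos_of_ne_zero (Nat.lcm_ne_zero (by omega) (by omega))
    · exact Nat.Coprime.coprime_dvd_left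
        (Nat.lcm_dvd (dvd_mul_right m M) (dvd_mul_left M m)) (hmcop.mul hMcop)
    · intro r hr hur
      exact Nat.lcm_dvd (hmdvd r hr hur) (hMdvd r hr hur)
  have hle : Nat.lcm m M ≤ M := le_csSup hbdd hlcm
  have hge : M ≤ Nat.lcm m M := Nat.le_of_dvd (Nat.pos_of_ne_zero (Nat.lcm_ne_zero (by omega) (by omega))) (Nat.dvd_lcm_right m M)
  have : Nat.lcm m M = M := le_antisymm hle hge
  calc m ∣ Nat.lcm m M := Nat.dvd_lcm_left m M
    _ = M := this

end Aux

/-- For a substitution joining `Σ = θ ∨ ζ` of two primitive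
substitutions of the same constant length (on a compatible alphabet `𝒜 ⊆ A × B` with
full projections), one has `lcm(h(θ), h(ζ)) ∣ h(Σ)` and
`max(c(θ), c(ζ)) ≤ c(Σ) ≤ c(θ)·c(ζ)`. -/
theorem joining_height_and_columnNumber_bounds
    {A B : Type*} [Finite A] [Finite B] (l : ℕ) (hl : 2 ≤ l)
    (θ : A → ℕ → A) (hθ : SubstPrimitive θ l)
    (ζ : B → ℕ → B) (hζ : SubstPrimitive ζ l)
    (a₀ : A) (ha₀ : θ a₀ 0 = a₀) (b₀ : B) (hb₀ : ζ b₀ 0 = b₀)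
    (𝒜 : Set (A × B))
    (hproj₁ : ∀ a : A, ∃ b : B, (a, b) ∈ 𝒜)
    (hproj₂ : ∀ b : B, ∃ a : A, (a, b) ∈ 𝒜)
    (hclosed : ∀ p ∈ 𝒜, ∀ j, j < l → (θ p.1 j, ζ p.2 j) ∈ 𝒜)
    (hmem : (a₀, b₀) ∈ 𝒜)
    (hSigmaPrim : SubstPrimitiveOn (joinSub θ ζ) l 𝒜) :
    Nat.lcm (substHeight θ l a₀) (substHeight ζ l b₀) ∣
        substHeight (joinSub θ ζ) l (a₀, b₀) ∧
    max (columnNumber θ l) (columnNumber ζ l) ≤ columnNumberOn (joinSub θ ζ) l 𝒜 ∧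
    columnNumberOn (joinSub θ ζ) l 𝒜 ≤ columnNumber θ l * columnNumber ζ l := by
    classical
  -- fixed point facts
  have hfix : ∀ r : ℕ, substFixedPoint (joinSub θ ζ) l (a₀, b₀) r
      = (substFixedPoint θ l a₀ r, substFixedPoint ζ l b₀ r) := by
    intro r
    simp [substFixedPoint, substIter_joinSub]
  have hu0 : substFixedPoint θ l a₀ 0 = a₀ := by
    simp [substFixedPoint, substIter, ha₀]
  have hv0 : substFixedPoint ζ l b₀ 0 = b₀ := by
    simp [substFixedPoint, substIter, hb₀]
  set u := substFixedPoint θ l a₀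
  set v := substFixedPoint ζ l b₀
  set w := substFixedPoint (joinSub θ ζ) l (a₀, b₀)
  set Sθ := { m : ℕ | 1 ≤ m ∧ Nat.Coprime m l ∧ ∀ r : ℕ, 1 ≤ r → u r = u 0 → m ∣ r } with hSθ
  set Sζ := { m : ℕ | 1 ≤ m ∧ Nat.Coprime m l ∧ ∀ r : ℕ, 1 ≤ r → v r = v 0 → m ∣ r } with hSζ
  set SJ := { m : ℕ | 1 ≤ m ∧ Nat.Coprime m l ∧ ∀ r : ℕ, 1 ≤ r → w r = w 0 → m ∣ r } with hSJ
  have hret : ∀ r : ℕ, w r = w 0 ↔ (u r = u 0 ∧ v r = v 0) := by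
    intro r
    rw [show w r = (u r, v r) from hfix r, show w 0 = (u 0, v 0) from hfix 0, Prod.ext_iff]
  refine ⟨?_, ?_, ?_⟩
  · -- height divisibility
    by_cases hex : ∃ r : ℕ, 1 ≤ r ∧ w r = w 0
    · obtain ⟨r₀, hr₀1, hr₀⟩ := hex
      have hbddJ : BddAbove SJ := ⟨r₀, fun m hm => Nat.le_of_dvd (by omega) (hm.2.2 r₀ hr₀1 hr₀)⟩
      have hbddθ : BddAbove Sθ :=
        ⟨r₀, fun m hm => Nat.le_of_dvd (by omega) (hm.2.2 r₀ hr₀1 ((hret r₀).1 hr₀).1)⟩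
      have hbddζ : BddAbove Sζ :=
        ⟨r₀, fun m hm => Nat.le_of_dvd (by omega) (hm.2.2 r₀ hr₀1 ((hret r₀).1 hr₀).2)⟩
      have h1θ : (1 : ℕ) ∈ Sθ := ⟨le_refl 1, Nat.coprime_one_left l, fun r _ _ => one_dvd r⟩
      have h1ζ : (1 : ℕ) ∈ Sζ := ⟨le_refl 1, Nat.coprime_one_left l, fun r _ _ => one_dvd r⟩
      have hθmem : sSup Sθ ∈ Sθ := Nat.sSup_mem ⟨1, h1θ⟩ hbddθ
      have hζmem : sSup Sζ ∈ Sζ := Nat.sSup_mem ⟨1, h1ζ⟩ hbddζ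
      have hlcmmem : Nat.lcm (sSup Sθ) (sSup Sζ) ∈ SJ := by
        obtain ⟨ha1, hacop, hadvd⟩ := hθmem
        obtain ⟨hb1, hbcop, hbdvd⟩ := hζmem
        refine ⟨?_, ?_, ?_⟩
        · exact Nat.pos_of_ne_zero (Nat.lcm_ne_zero (by omega) (by omega))
        · exact Nat.Coprime.coprime_dvd_left
            (Nat.lcm_dvd (dvd_mul_right _ _) (dvd_mul_left _ _)) (hacop.mul hbcop)
        · intro r hr hwr
          obtain ⟨hur, hvr⟩ := (hret r).1 hwr
          exact Nat.lcm_dvd (hadvd r hr hur) (hbdvd r hr hvr)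
      exact mem_dvd_sSup_of_height (u := fun r s => w r = w s) SJ rfl hbddJ hlcmmem
    · -- no return times: the Σ-height set is unbounded, so its sSup is 0
      have hSJeq : SJ = { m : ℕ | 1 ≤ m ∧ Nat.Coprime m l } := by
        ext m
        simp only [hSJ, Set.mem_setOf_eq, and_congr_right_iff]
        intro _
        constructor
        · rintro ⟨h1, _⟩; exact h1
        · intro h1
          refine ⟨h1, fun r hr hwr => absurd ⟨r, hr, hwr⟩ hex⟩
      have hnb : ¬ BddAbove SJ := by
        rintro ⟨n, hn⟩
        have hmem' : (1 + n * l) ∈ SJ := by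
          rw [hSJeq]
          exact ⟨by omega, by simpa using (Nat.coprime_one_left l).add_mul_left_left n⟩
        have := hn hmem'
        nlinarith
      have : sSup SJ = 0 := by
        rw [csSup_of_not_bddAbove hnb]
        simp
      rw [show substHeight (joinSub θ ζ) l (a₀, b₀) = sSup SJ from rfl, this]
      exact dvd_zero _
  · -- lower bound for column number
    have hne : { n : ℕ | ∃ k, 1 ≤ k ∧ ∃ j, j < l ^ k ∧
        ((fun p => substIter (joinSub θ ζ) l k p j) '' 𝒜).ncard = n }.Nonempty :=
      ⟨_, 1, le_refl 1, 0, by positivity, rfl⟩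
    have key₁ : ∀ k j, 1 ≤ k → j < l ^ k →
        columnNumber θ l ≤ ((fun p => substIter (joinSub θ ζ) l k p j) '' 𝒜).ncard := by
      intro k j hk hj
      have h1 : columnNumber θ l ≤ ((fun a => substIter θ l k a j) '' Set.univ).ncard :=
        Nat.sInf_le ⟨k, hk, j, hj, rfl⟩
      have h2 : (fun a => substIter θ l k a j) '' Set.univ
          = Prod.fst '' ((fun p => substIter (joinSub θ ζ) l k p j) '' 𝒜) := by
        ext x
        simp only [Set.image_image, Set.mem_image, Set.mem_univ, true_and]
        constructor
        · rintro ⟨a, rfl⟩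
          obtain ⟨b, hb⟩ := hproj₁ a
          exact ⟨(a, b), hb, by rw [substIter_joinSub]⟩
        · rintro ⟨p, _, rfl⟩
          exact ⟨p.1, by rw [substIter_joinSub]⟩
      rw [h2] at h1
      exact h1.trans (Set.ncard_image_le (Set.toFinite _))
    have key₂ : ∀ k j, 1 ≤ k → j < l ^ k →
        columnNumber ζ l ≤ ((fun p => substIter (joinSub θ ζ) l k p j) '' 𝒜).ncard := by
      intro k j hk hj
      have h1 : columnNumber ζ l ≤ ((fun b => substIter ζ l k b j) '' Set.univ).ncard :=
        Nat.sInf_le ⟨k, hk, j, hj, rfl⟩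
      have h2 : (fun b => substIter ζ l k b j) '' Set.univ
          = Prod.snd '' ((fun p => substIter (joinSub θ ζ) l k p j) '' 𝒜) := by
        ext x
        simp only [Set.image_image, Set.mem_image, Set.mem_univ, true_and]
        constructor
        · rintro ⟨b, rfl⟩
          obtain ⟨a, ha⟩ := hproj₂ b
          exact ⟨(a, b), ha, by rw [substIter_joinSub]⟩
        · rintro ⟨p, _, rfl⟩
          exact ⟨p.2, by rw [substIter_joinSub]⟩
      rw [h2] at h1
      exact h1.trans (Set.ncard_image_le (Set.toFinite _))
    apply max_le
    · apply le_csInf hne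
      rintro n ⟨k, hk, j, hj, rfl⟩
      exact key₁ k j hk hj
    · apply le_csInf hne
      rintro n ⟨k, hk, j, hj, rfl⟩
      exact key₂ k j hk hj
  · -- upper bound for column number
    have hθne : { n : ℕ | ∃ k, 1 ≤ k ∧ ∃ j, j < l ^ k ∧
        ((fun a => substIter θ l k a j) '' Set.univ).ncard = n }.Nonempty :=
      ⟨_, 1, le_refl 1, 0, by positivity, rfl⟩
    have hζne : { n : ℕ | ∃ k, 1 ≤ k ∧ ∃ j, j < l ^ k ∧
        ((fun b => substIter ζ l k b j) '' Set.univ).ncard = n }.Nonempty :=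
      ⟨_, 1, le_refl 1, 0, by positivity, rfl⟩
    obtain ⟨k₁, hk₁, j₁, hj₁, hc₁⟩ := Nat.sInf_mem hθne
    obtain ⟨k₂, hk₂, j₂, hj₂, hc₂⟩ := Nat.sInf_mem hζne
    set k := k₂ + k₁ with hkdef
    set j := l ^ k₂ * j₁ + j₂ with hjdef
    have hjlt : j < l ^ k := by
      have h1 : j₁ + 1 ≤ l ^ k₁ := hj₁
      calc j < l ^ k₂ * j₁ + l ^ k₂ := by omega
        _ = l ^ k₂ * (j₁ + 1) := by ring
        _ ≤ l ^ k₂ * l ^ k₁ := Nat.mul_le_mul_left _ h1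
        _ = l ^ k := by rw [hkdef, pow_add]
    have hdiv : j / l ^ k₂ = j₁ := by
      rw [hjdef, Nat.mul_add_div (by positivity), Nat.div_eq_of_lt hj₂, Nat.add_zero]
    have hmod : j % l ^ k₂ = j₂ := by
      rw [hjdef, Nat.mul_add_mod, Nat.mod_eq_of_lt hj₂]
    -- the Σ-column at (k, j) is contained in a product of small sets
    set D₁ := (fun c => substIter θ l k₂ c j₂) ''
      ((fun a => substIter θ l k₁ a j₁) '' Set.univ) with hD₁
    set D₂ := (fun b => substIter ζ l k₂ b j₂) '' Set.univ with hD₂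
    have hsub : (fun p => substIter (joinSub θ ζ) l k p j) '' 𝒜 ⊆ D₁ ×ˢ D₂ := by
      rintro x ⟨p, _, rfl⟩
      show substIter (joinSub θ ζ) l k p j ∈ D₁ ×ˢ D₂
      rw [substIter_joinSub, Set.mem_prod]
      constructor
      · rw [hkdef, substIter_add θ l k₂ k₁, hdiv, hmod]
        exact ⟨substIter θ l k₁ p.1 j₁, ⟨p.1, Set.mem_univ _, rfl⟩, rfl⟩
      · rw [hkdef, substIter_add ζ l k₂ k₁, hdiv, hmod]
        exact ⟨substIter ζ l k₁ p.2 j₁, Set.mem_univ _, rfl⟩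
    have hcard : ((fun p => substIter (joinSub θ ζ) l k p j) '' 𝒜).ncard
        ≤ columnNumber θ l * columnNumber ζ l := by
      have h1 : D₁.ncard ≤ columnNumber θ l :=
        le_of_le_of_eq (Set.ncard_image_le (Set.toFinite _)) hc₁
      have h2 : D₂.ncard = columnNumber ζ l := hc₂
      have hprod : (D₁ ×ˢ D₂).ncard = D₁.ncard * D₂.ncard := by
        rw [← Nat.card_coe_set_eq, ← Nat.card_coe_set_eq, ← Nat.card_coe_set_eq,
          Nat.card_congr (Equiv.Set.prod D₁ D₂), Nat.card_prod]
      calc ((fun p => substIter (joinSub θ ζ) l k p j) '' 𝒜).ncard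
          ≤ (D₁ ×ˢ D₂).ncard := Set.ncard_le_ncard hsub (Set.toFinite _)
        _ = D₁.ncard * D₂.ncard := hprod
        _ ≤ columnNumber θ l * columnNumber ζ l := by
            rw [h2]; exact Nat.mul_le_mul_right _ h1
    calc columnNumberOn (joinSub θ ζ) l 𝒜
        ≤ ((fun p => substIter (joinSub θ ζ) l k p j) '' 𝒜).ncard :=
          Nat.sInf_le ⟨k, by omega, j, hjlt, rfl⟩
      _ ≤ columnNumber θ l * columnNumber ζ l := hcard
end

section
/- In the group-extension setting below, the substitution Θ̂ : G × 𝒳 → (G × 𝒳)^λ is primitive: there exists k ≥ 1 such that for all (h, M'), (g, M) ∈ G × 𝒳 there is j < λ^k with Θ̂^k(h, M')_j = (g, M). -/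
open Filter Topology

/-!
Write `T_k(M, M')` for the set of cocycle values `σ^{(k)}(M, j)` at the positions `j` where
`~θ^k(M)_j = M'`; since `Θ̂^k(h, M)_j = (h σ^{(k)}(M, j), ~θ^k(M)_j)`, primitivity of `Θ̂` on
`G × 𝒳` amounts to `h⁻¹ g ∈ T_k(M', M)` for one `k` and all `h, g ∈ G`, `M', M ∈ 𝒳`.
Concatenating paths multiplies cocycles, so the return cocycles `⋃ₖ T_k(M₀, M₀)` form a
submonoid of the finite group `Sym(c)`, hence a group. By (H1) every path can be closed up
at `M₀` for free, so with `q ∈ T(M₀, M)` both `q` and `q σ(M, j)` are return cocycles, and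
thus so is every generator `σ(M, j)` of `G`. By (H2) return cocycles of length `k` are also
return cocycles of every length `k' ≥ k`, so all of `G` is realised at one length `N`, and
a path `M' → M₀ → M₀ → M` of lengths `k₀`, `N` and a primitivity exponent of `~θ`
realises `h⁻¹ g`.
-/

lemma pos_of_lt_pow_succ {l k j : ℕ} (h : j < l ^ (k + 1)) : 0 < l :=
  Nat.pos_of_ne_zero fun hl => by simp [hl] at h

lemma div_lt_pow_of_lt_pow_succ {l k j : ℕ} (h : j < l ^ (k + 1)) : j / l < l ^ k := by
  rwa [Nat.div_lt_iff_lt_mul (pos_of_lt_pow_succ h), ← pow_succ]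

lemma mul_pow_add_lt_pow_add {l k₁ k₂ j₁ j₂ : ℕ} (h₁ : j₁ < l ^ k₁) (h₂ : j₂ < l ^ k₂) :
    j₁ * l ^ k₂ + j₂ < l ^ (k₁ + k₂) :=
  calc j₁ * l ^ k₂ + j₂ < (j₁ + 1) * l ^ k₂ := by nlinarith
    _ ≤ l ^ k₁ * l ^ k₂ := Nat.mul_le_mul_right _ h₁
    _ = l ^ (k₁ + k₂) := (pow_add l k₁ k₂).symm

lemma div_mod_mul_pow_succ_add {l k j₁ j₂ : ℕ} (h₂ : j₂ < l ^ (k + 1)) :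
    (j₁ * l ^ (k + 1) + j₂) / l = j₁ * l ^ k + j₂ / l ∧
      (j₁ * l ^ (k + 1) + j₂) % l = j₂ % l := by
  have hre : j₁ * l ^ (k + 1) + j₂ = l * (j₁ * l ^ k) + j₂ := by ring
  rw [hre, Nat.mul_add_div (pos_of_lt_pow_succ h₂), Nat.mul_add_mod]
  exact ⟨rfl, rfl⟩

section Transitions

variable {X : Type*} {c : ℕ} (tilde : X → ℕ → X) (σ : X → ℕ → Equiv.Perm (Fin c)) {l : ℕ}

lemma substIter_add_s18 {A : Type*} (θ : A → ℕ → A) (k₁ : ℕ) {k₂ : ℕ} (a : A) (j₁ : ℕ) {j₂ : ℕ}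
    (h₂ : j₂ < l ^ k₂) :
    substIter θ l (k₁ + k₂) a (j₁ * l ^ k₂ + j₂) = substIter θ l k₂ (substIter θ l k₁ a j₁) j₂ := by
  induction k₂ generalizing j₂ with
  | zero =>
    obtain rfl : j₂ = 0 := by simpa using h₂
    simp [substIter]
  | succ k ih =>
    obtain ⟨hdiv, hmod⟩ := div_mod_mul_pow_succ_add (j₁ := j₁) h₂
    rw [← add_assoc, substIter, hdiv, hmod, ih (div_lt_pow_of_lt_pow_succ h₂), substIter]

lemma sigmaIter_add (k₁ : ℕ) {k₂ : ℕ} (M : X) (j₁ : ℕ) {j₂ : ℕ} (h₂ : j₂ < l ^ k₂) :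
    sigmaIter tilde σ l (k₁ + k₂) M (j₁ * l ^ k₂ + j₂) =
      sigmaIter tilde σ l k₁ M j₁ * sigmaIter tilde σ l k₂ (substIter tilde l k₁ M j₁) j₂ := by
  induction k₂ generalizing j₂ with
  | zero =>
    obtain rfl : j₂ = 0 := by simpa using h₂
    simp [sigmaIter]
  | succ k ih =>
    obtain ⟨hdiv, hmod⟩ := div_mod_mul_pow_succ_add (j₁ := j₁) h₂
    have hj₂ := div_lt_pow_of_lt_pow_succ h₂
    rw [← add_assoc, sigmaIter, hdiv, hmod, ih hj₂, substIter_add_s18 tilde k₁ M j₁ hj₂, mul_assoc,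
      sigmaIter]

lemma substIter_hatTheta (k : ℕ) (h : Equiv.Perm (Fin c)) (M : X) (j : ℕ) :
    substIter (hatTheta tilde σ) l k (h, M) j =
      (h * sigmaIter tilde σ l k M j, substIter tilde l k M j) := by
  induction k generalizing j with
  | zero => simp [substIter, sigmaIter]
  | succ k ih => simp [substIter, sigmaIter, ih, hatTheta, mul_assoc]

lemma sigmaIter_mem_cocycleGroup (hl : 0 < l) (k : ℕ) (M : X) (j : ℕ) :
    sigmaIter tilde σ l k M j ∈ cocycleGroup σ l := by
  induction k generalizing M j with
  | zero => exact one_mem _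
  | succ k ih =>
    exact mul_mem (ih M (j / l)) (Subgroup.subset_closure ⟨_, j % l, Nat.mod_lt _ hl, rfl⟩)

variable (l)

def transitionCocycles (k : ℕ) (M M' : X) : Set (Equiv.Perm (Fin c)) :=
  { g | ∃ j < l ^ k, substIter tilde l k M j = M' ∧ sigmaIter tilde σ l k M j = g }

variable {tilde σ l}

lemma one_mem_transitionCocycles_zero (M : X) : 1 ∈ transitionCocycles tilde σ l 0 M M :=
  ⟨0, by simp, rfl, rfl⟩

lemma mem_transitionCocycles_one {M : X} {j : ℕ} (hj : j < l) :
    σ M j ∈ transitionCocycles tilde σ l 1 M (tilde M j) := by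
  refine ⟨j, by simpa using hj, ?_, ?_⟩ <;> simp [substIter, sigmaIter, Nat.mod_eq_of_lt hj]

lemma mul_mem_transitionCocycles {k₁ k₂ : ℕ} {M M' M'' : X} {g g' : Equiv.Perm (Fin c)}
    (hg : g ∈ transitionCocycles tilde σ l k₁ M M')
    (hg' : g' ∈ transitionCocycles tilde σ l k₂ M' M'') :
    g * g' ∈ transitionCocycles tilde σ l (k₁ + k₂) M M'' := by
  obtain ⟨j₁, hj₁, rfl, rfl⟩ := hg
  obtain ⟨j₂, hj₂, rfl, rfl⟩ := hg'
  exact ⟨j₁ * l ^ k₂ + j₂, mul_pow_add_lt_pow_add hj₁ hj₂, substIter_add_s18 tilde k₁ M j₁ hj₂,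
    sigmaIter_add tilde σ k₁ M j₁ hj₂⟩

lemma transitionCocycles_subset_cocycleGroup (hl : 0 < l) (k : ℕ) (M M' : X) :
    transitionCocycles tilde σ l k M M' ⊆ cocycleGroup σ l := by
  rintro _ ⟨j, -, -, rfl⟩
  exact sigmaIter_mem_cocycleGroup tilde σ hl k M j

lemma one_mem_transitionCocycles_of_fixed {M₀ : X} (H2a : tilde M₀ 0 = M₀) (H2b : σ M₀ 0 = 1)
    (hl : 0 < l) (t : ℕ) : 1 ∈ transitionCocycles tilde σ l t M₀ M₀ := by
  induction t with
  | zero => exact one_mem_transitionCocycles_zero M₀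
  | succ t ih =>
    have h := mul_mem_transitionCocycles ih (mem_transitionCocycles_one (M := M₀) hl)
    rwa [H2a, H2b, mul_one] at h

lemma mem_transitionCocycles_of_le {M₀ : X} (H2a : tilde M₀ 0 = M₀) (H2b : σ M₀ 0 = 1)
    (hl : 0 < l) {k k' : ℕ} (hk : k ≤ k') {g : Equiv.Perm (Fin c)}
    (hg : g ∈ transitionCocycles tilde σ l k M₀ M₀) :
    g ∈ transitionCocycles tilde σ l k' M₀ M₀ := by
  have h := mul_mem_transitionCocycles hg (one_mem_transitionCocycles_of_fixed H2a H2b hl (k' - k))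
  rwa [mul_one, Nat.add_sub_cancel' hk] at h

variable (tilde σ l)

def returnCocycles (M₀ : X) : Submonoid (Equiv.Perm (Fin c)) where
  carrier := ⋃ k, transitionCocycles tilde σ l k M₀ M₀
  one_mem' := Set.mem_iUnion.2 ⟨0, one_mem_transitionCocycles_zero M₀⟩
  mul_mem' := by
    rintro _ _ ⟨_, ⟨k₁, rfl⟩, hg⟩ ⟨_, ⟨k₂, rfl⟩, hg'⟩
    exact Set.mem_iUnion.2 ⟨k₁ + k₂, mul_mem_transitionCocycles hg hg'⟩

variable {tilde σ l}

lemma cocycleGroup_le_returnCocycles {M₀ : X} {k₀ kp : ℕ}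
    (hprim : ∀ M M' : X, ∃ g, g ∈ transitionCocycles tilde σ l kp M M')
    (H1 : ∀ M : X, 1 ∈ transitionCocycles tilde σ l k₀ M M₀) :
    (cocycleGroup σ l).toSubmonoid ≤ returnCocycles tilde σ l M₀ := by
  set R := returnCocycles tilde σ l M₀
  have hR : (Subgroup.closure (R : Set (Equiv.Perm (Fin c)))).toSubmonoid = R := by
    rw [Subgroup.closure_toSubmonoid_of_finite, Submonoid.closure_eq]
  rw [← hR]
  refine Subgroup.toSubmonoid_mono (Subgroup.closure_le _ |>.2 ?_)
  rintro _ ⟨M, j, hj, rfl⟩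
  obtain ⟨q, hq⟩ := hprim M₀ M
  have hqR : q ∈ R := Set.mem_iUnion.2 ⟨_, by simpa using mul_mem_transitionCocycles hq (H1 M)⟩
  have hqσR : q * σ M j ∈ R := Set.mem_iUnion.2 ⟨_, by
    simpa using mul_mem_transitionCocycles
      (mul_mem_transitionCocycles hq (mem_transitionCocycles_one hj)) (H1 _)⟩
  simpa using mul_mem (inv_mem (Subgroup.subset_closure hqR)) (Subgroup.subset_closure hqσR)

lemma exists_cocycleGroup_subset_transitionCocycles {M₀ : X} {k₀ kp : ℕ}
    (hprim : ∀ M M' : X, ∃ g, g ∈ transitionCocycles tilde σ l kp M M')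
    (H1 : ∀ M : X, 1 ∈ transitionCocycles tilde σ l k₀ M M₀)
    (H2a : tilde M₀ 0 = M₀) (H2b : σ M₀ 0 = 1) (hl : 0 < l) :
    ∃ N, (cocycleGroup σ l : Set (Equiv.Perm (Fin c))) ⊆ transitionCocycles tilde σ l N M₀ M₀ := by
  have hev : ∀ᶠ N in Filter.atTop, ∀ g : cocycleGroup σ l,
      (g : Equiv.Perm (Fin c)) ∈ transitionCocycles tilde σ l N M₀ M₀ := by
    refine Filter.eventually_all.2 fun g => ?_
    obtain ⟨_, ⟨k, rfl⟩, hk⟩ := cocycleGroup_le_returnCocycles hprim H1 g.2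
    exact Filter.eventually_atTop.2 ⟨k, fun k' hk' => mem_transitionCocycles_of_le H2a H2b hl hk' hk⟩
  obtain ⟨N, hN⟩ := hev.exists
  exact ⟨N, fun g hg => hN ⟨g, hg⟩⟩

end Transitions

theorem hatTheta_primitive_general
    {X : Type*} (l c : ℕ) (hl : 2 ≤ l)
    (tilde : X → ℕ → X) (hprim : SubstPrimitive tilde l)
    (σ : X → ℕ → Equiv.Perm (Fin c)) (M₀ : X)
    (H1 : ∃ k₀, 1 ≤ k₀ ∧ ∃ j₀, j₀ < l ^ k₀ ∧ ∀ M : X,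
      substIter tilde l k₀ M j₀ = M₀ ∧ sigmaIter tilde σ l k₀ M j₀ = 1)
    (H2a : tilde M₀ 0 = M₀) (H2b : σ M₀ 0 = 1) :
    SubstPrimitiveOn (hatTheta tilde σ) l
      { p : Equiv.Perm (Fin c) × X | p.1 ∈ cocycleGroup σ l } := by
  have hpos : 0 < l := by omega
  obtain ⟨k₀, hk₀, j₀, hj₀, hH1⟩ := H1
  have hret : ∀ M, 1 ∈ transitionCocycles tilde σ l k₀ M M₀ :=
    fun M => ⟨j₀, hj₀, hH1 M⟩
  obtain ⟨kp, -, hp⟩ := hprim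
  have hpath : ∀ M M', ∃ g, g ∈ transitionCocycles tilde σ l kp M M' := fun M M' =>
    let ⟨j, hj, hM'⟩ := hp M M'
    ⟨_, j, hj, hM', rfl⟩
  obtain ⟨N, hN⟩ := exists_cocycleGroup_subset_transitionCocycles hpath hret H2a H2b hpos
  refine ⟨k₀ + (N + kp), by omega, ?_⟩
  rintro ⟨h, M'⟩ (hh : h ∈ cocycleGroup σ l) ⟨g, M⟩ (hg : g ∈ cocycleGroup σ l)
  obtain ⟨q, hq⟩ := hpath M₀ M
  have hqG := transitionCocycles_subset_cocycleGroup hpos kp M₀ M hq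
  have he := hN (mul_mem (mul_mem (inv_mem hh) hg) (inv_mem hqG))
  obtain ⟨j, hj, hM, hσ⟩ :=
    mul_mem_transitionCocycles (hret M') (mul_mem_transitionCocycles he hq)
  refine ⟨j, hj, ?_⟩
  rw [substIter_hatTheta, hM, hσ]
  simp [mul_assoc]

/-- In the group-extension setting, the substitution
`Θ̂ : G × 𝒳 → (G × 𝒳)^λ` is primitive. -/
theorem hatTheta_primitive
    {X : Type*} [Finite X] (l c : ℕ) (hl : 2 ≤ l) (hc : 1 ≤ c)
    (tilde : X → ℕ → X) (hprim : SubstPrimitive tilde l)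
    (σ : X → ℕ → Equiv.Perm (Fin c)) (M₀ : X)
    (H1 : ∃ k₀, 1 ≤ k₀ ∧ ∃ j₀, j₀ < l ^ k₀ ∧ ∀ M : X,
      substIter tilde l k₀ M j₀ = M₀ ∧ sigmaIter tilde σ l k₀ M j₀ = 1)
    (H2a : tilde M₀ 0 = M₀) (H2b : σ M₀ 0 = 1) :
    SubstPrimitiveOn (hatTheta tilde σ) l
      { p : Equiv.Perm (Fin c) × X | p.1 ∈ cocycleGroup σ l } :=
  hatTheta_primitive_general l c hl tilde hprim σ M₀ H1 H2a H2b
end
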